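/- arXiv:2103.06095 — 3 statements merged into one kernel-verified Lean document; each statement's English description precedes it below -/
import Mathlib

section
/- Let G be a finitely generated group and N ≤ Z(G) a central subgroup such that G/N is finitely presented. Then N is finitely generated. -/
/-!
Choose a finite presentation `⟨X | R⟩` of `G/N` and lift the generators `X` to `G`. Together with
the lifted relators `R`, the finitely many elements `s⁻¹ · w_s`, where `s` runs over a finite
generating set of `G` and `w_s` is a word in the lifted generators with the same image in `G/N`,
normally generate `N`. A central subgroup is normal, so the normal closure of a set of central
elements is its subgroup closure; hence `N` is finitely generated.
-/

open Function Set Subgroup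

/-- A group is finitely presented if it is isomorphic to a presented group with
finitely many generators and finitely many relations. -/
def FinitelyPresentedGroup (Q : Type*) [Group Q] : Prop :=
  ∃ (n : ℕ) (rels : Finset (FreeGroup (Fin n))),
    Nonempty (PresentedGroup ((rels : Set (FreeGroup (Fin n)))) ≃* Q)

theorem FinitelyPresentedGroup.isFinitelyPresented {Q : Type*} [Group Q]
    (hQ : FinitelyPresentedGroup Q) : Group.IsFinitelyPresented Q := by
  obtain ⟨n, rels, ⟨e⟩⟩ := hQ
  exact .equiv e

theorem Subgroup.normal_of_le_center {G : Type*} [Group G] {H : Subgroup G}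
    (hH : H ≤ center G) : H.Normal :=
  ⟨fun x hx g => by rwa [mem_center_iff.mp (hH hx) g, mul_inv_cancel_right]⟩

theorem Subgroup.IsFinitelyNormallyGenerated.fg_of_le_center {G : Type*} [Group G]
    {N : Subgroup G} (hN : N.IsFinitelyNormallyGenerated) (hc : N ≤ center G) : N.FG := by
  obtain ⟨S, hS, rfl⟩ := hN
  have : (closure S).Normal :=
    normal_of_le_center (closure_le_normalClosure.trans hc)
  exact (fg_iff _).mpr ⟨S, le_antisymm closure_le_normalClosure
    (normalClosure_le_normal subset_closure), hS⟩

theorem QuotientGroup.mk'_comp_surjective_of_closure_eq_top {F H : Type*} [Group F] [Group H]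
    {K : Subgroup F} [K.Normal] {S : Set F} (hS : closure S = ⊤) (α : H →* F)
    (hα : ∀ s ∈ S, ∃ y, s⁻¹ * α y ∈ K) : Surjective ((mk' K).comp α) := by
  rw [← MonoidHom.range_eq_top, eq_top_iff, ← map_top_of_surjective _ (mk'_surjective K), ← hS,
    MonoidHom.map_closure, closure_le]
  rintro _ ⟨s, hs, rfl⟩
  obtain ⟨y, hy⟩ := hα s hs
  exact ⟨y, (QuotientGroup.eq.mpr hy).symm⟩

/-- Finite presentability does not depend on the finite generating set. -/
theorem Group.IsFinitelyPresented.ker_isFinitelyNormallyGenerated {F Q : Type*} [Group F]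
    [Group Q] [hF : Group.FG F] [hQ : Group.IsFinitelyPresented Q] {φ : F →* Q}
    (hφ : Surjective φ) : φ.ker.IsFinitelyNormallyGenerated := by
  obtain ⟨n, p, hp, R, hR, hRp⟩ := hQ.out
  obtain ⟨S, hS, hSfin⟩ := Group.fg_iff.mp hF
  have := hSfin.to_subtype
  choose w hw using fun i => hφ (p (FreeGroup.of i))
  let α : FreeGroup (Fin n) →* F := FreeGroup.lift w
  have hφα : ∀ y, φ (α y) = p y :=
    DFunLike.congr_fun (FreeGroup.ext_hom (φ.comp α) p fun i => by simp [α, hw])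
  choose u hu using fun s : S => hp (φ s)
  set K := normalClosure (α '' R ∪ range fun s : S => (s : F)⁻¹ * α (u s))
  have hRK : ∀ y ∈ normalClosure R, α y ∈ K := fun y hy =>
    normalClosure_mono subset_union_left (map_normalClosure_le R α ⟨y, hy, rfl⟩)
  have hKφ : K ≤ φ.ker := by
    refine normalClosure_le_normal (union_subset ?_ ?_)
    · rintro _ ⟨r, hr, rfl⟩
      rw [SetLike.mem_coe, MonoidHom.mem_ker, hφα, ← MonoidHom.mem_ker, ← hRp]
      exact subset_normalClosure hr
    · rintro _ ⟨s, rfl⟩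
      simp [hφα, hu]
  refine ⟨_, (hR.image α).union (finite_range _), le_antisymm hKφ fun x hx => ?_⟩
  -- `x ≡ α y` modulo `K`, and `x ∈ ker φ` forces `p y = 1`, so `y` is a consequence of `R`.
  obtain ⟨y, hy⟩ := QuotientGroup.mk'_comp_surjective_of_closure_eq_top (K := K) hS α
    (fun s hs => ⟨u ⟨s, hs⟩, subset_normalClosure (mem_union_right _ ⟨⟨s, hs⟩, rfl⟩)⟩) x
  have hyx : (α y)⁻¹ * x ∈ K := QuotientGroup.eq.mp hy
  have hy1 : y ∈ normalClosure R := by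
    rw [hRp, MonoidHom.mem_ker, ← hφα]
    simpa [MonoidHom.mem_ker.mp hx] using hKφ hyx
  simpa using K.mul_mem (hRK y hy1) hyx

/-- If `G` is finitely generated, `N ≤ Z(G)` is central, and `G/N` is finitely
presented, then `N` is finitely generated. -/
theorem stmt5 {G : Type*} [Group G] (hG : Group.FG G) (N : Subgroup G) [N.Normal]
    (hN : N ≤ Subgroup.center G) (hQ : FinitelyPresentedGroup (G ⧸ N)) : N.FG := by
  have := hQ.isFinitelyPresented
  have hNfng : N.IsFinitelyNormallyGenerated := by
    simpa only [QuotientGroup.ker_mk'] using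
      Group.IsFinitelyPresented.ker_isFinitelyNormallyGenerated (QuotientGroup.mk'_surjective N)
  exact hNfng.fg_of_le_center hN
end

section
/- Let G = M *_K A be an amalgamated free product where A is abelian and K is a common subgroup of M and A. If G is finitely generated, then M is finitely generated. -/
universe u

/-- The two-element family `{M, A}` indexed by `Bool`. -/
def twoFam (M A : Type u) : Bool → Type u
  | true => M
  | false => A

instance twoFamGroup {M A : Type u} [Group M] [Group A] : ∀ b, Group (twoFam M A b)
  | true => ‹Group M›
  | false => ‹Group A›

/-- The pair of injections `K → M`, `K → A` as a family of homomorphisms. -/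
def twoHom {K : Type*} {M A : Type u} [Group K] [Group M] [Group A]
    (kM : K →* M) (kA : K →* A) : ∀ b, K →* twoFam M A b
  | true => kM
  | false => kA

/-!
A finite generating set of `M *_K A` lies in the subgroup generated by finitely generated
subgroups `M₁ ≤ M` and `B₁ ≤ A`. Subgroups of the finitely generated abelian group `B₁` are
finitely generated, so `M₀ = ⟨M₁, K ∩ B₁⟩` is finitely generated, and `B₀ = B₁ · (K ∩ M₀)` is a
subgroup because `A` is abelian; now `M₀` and `B₀` meet `K` in the same subgroup `C`.
For such compatible subgroups every element of `⟨M₀, B₀⟩` is `c * w` with `c ∈ C` and `w` a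
reduced word with letters in `M₀` and `B₀`, and by uniqueness of normal forms a reduced word lying
in `M` has all its letters in `M`. Hence `M = ⟨M₀, B₀⟩ ∩ M = M₀`.
-/

namespace Subgroup

variable {G G' : Type*} [Group G] [Group G']

theorem FG.map {P : Subgroup G} (hP : P.FG) (f : G →* G') : (P.map f).FG := by
  rw [fg_iff_submonoid_fg, map_toSubmonoid]
  exact ((fg_iff_submonoid_fg P).1 hP).map f

theorem FG.of_map_injective {P : Subgroup G} {f : G →* G'} (hf : Function.Injective f)
    (hP : (P.map f).FG) : P.FG := by
  rw [fg_iff_submonoid_fg, map_toSubmonoid] at *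
  exact hP.map_injective f hf

theorem FG.of_le_of_commGroup {A : Type*} [CommGroup A] {S T : Subgroup A} (hT : T.FG)
    (hST : S ≤ T) : S.FG := by
  rw [fg_iff_add_fg] at hT ⊢
  have hT' := (Submodule.fg_iff_addSubgroup_fg (AddSubgroup.toIntSubmodule T.toAddSubgroup)).2 hT
  exact (Submodule.fg_iff_addSubgroup_fg (AddSubgroup.toIntSubmodule S.toAddSubgroup)).1
    (hT'.of_le hST)

theorem exists_finset_subset_of_mem_closure {s : Set G} {x : G} (hx : x ∈ closure s) :
    ∃ t : Finset G, ↑t ⊆ s ∧ x ∈ closure (t : Set G) := by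
  classical
  induction hx using closure_induction with
  | mem x hx => exact ⟨{x}, by simpa using hx, subset_closure (by simp)⟩
  | one => exact ⟨∅, by simp, one_mem _⟩
  | mul x y _ _ hx hy =>
    obtain ⟨t, hts, hxt⟩ := hx
    obtain ⟨u, hus, hyu⟩ := hy
    refine ⟨t ∪ u, by simpa using And.intro hts hus, mul_mem ?_ ?_⟩
    · exact closure_mono (by simp) hxt
    · exact closure_mono (by simp) hyu
  | inv x _ hx =>
    obtain ⟨t, hts, hxt⟩ := hx
    exact ⟨t, hts, inv_mem hxt⟩

end Subgroup

theorem Group.exists_finset_subset_closure_eq_top {G : Type*} [Group G] [Group.FG G] {s : Set G}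
    (hs : Subgroup.closure s = ⊤) :
    ∃ t : Finset G, ↑t ⊆ s ∧ Subgroup.closure (t : Set G) = ⊤ := by
  classical
  obtain ⟨S, hS⟩ := Group.fg_def.1 ‹_›
  choose! t hts hxt using fun x (_ : x ∈ S) =>
    Subgroup.exists_finset_subset_of_mem_closure (hs ▸ Subgroup.mem_top x)
  refine ⟨S.biUnion t, by simpa using hts, eq_top_iff.2 ?_⟩
  rw [← hS, Subgroup.closure_le]
  intro x hx
  exact Subgroup.closure_mono (Finset.coe_subset.2 (Finset.subset_biUnion_of_mem t hx)) (hxt x hx)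

namespace Monoid.PushoutI

open CoprodI NormalWord

variable {ι : Type*} {G : ι → Type*} {H : Type*} [∀ i, Group (G i)] [Group H]
  {φ : ∀ i, H →* G i}

theorem ofCoprodI_word_prod (w : Word G) :
    ofCoprodI (φ := φ) w.prod = (w.toList.map fun l => of (φ := φ) l.1 l.2).prod := by
  simp [Word.prod, map_list_prod, Function.comp_def]

theorem Reduced.fst_eq_of_mem_range_of (hφ : ∀ i, Function.Injective (φ i)) {w : Word G}
    (hw : Reduced φ w) {i : ι} (h : ofCoprodI w.prod ∈ (of (φ := φ) i).range) :
    ∀ l ∈ w.toList, l.1 = i := by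
  obtain ⟨g, hg⟩ := h
  obtain ⟨d⟩ := transversal_nonempty φ hφ
  by_cases hgφ : g ∈ (φ i).range
  · obtain ⟨k, rfl⟩ := hgφ
    rw [hw.eq_empty_of_mem_range hφ ⟨k, by rw [← hg, of_apply_eq_base]⟩]
    simp [Word.empty]
  · -- compare the normal forms of `w` and of the one-letter word `[g]`
    have hg1 : g ≠ 1 := fun h => hgφ (h ▸ one_mem _)
    let v : Word G := ⟨[⟨i, g⟩], by simpa using hg1, List.isChain_singleton _⟩
    have hv : Reduced φ v := by simpa [Reduced, v] using hgφ
    obtain ⟨w', hw'prod, hw'fst⟩ := hw.exists_normalWord_prod_eq d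
    obtain ⟨v', hv'prod, hv'fst⟩ := hv.exists_normalWord_prod_eq d
    have hwv : w' = v' := prod_injective <| by
      rw [hw'prod, hv'prod, ← hg]
      simp [v, Word.prod]
    intro l hl
    have hmem := List.mem_map_of_mem (f := Sigma.fst) hl
    rw [← hw'fst, hwv, hv'fst] at hmem
    simpa [v] using hmem

variable (φ) in
def HasReducedForm (P : ∀ i, Subgroup (G i)) (C : Subgroup H) (g : PushoutI φ) : Prop :=
  ∃ k ∈ C, ∃ w : Word G, Reduced φ w ∧ (∀ l ∈ w.toList, l.2 ∈ P l.1) ∧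
    g = base φ k * ofCoprodI w.prod

theorem HasReducedForm.of_mul {P : ∀ i, Subgroup (G i)} {C : Subgroup H}
    (hPC : ∀ i, (P i).comap (φ i) = C) {g : PushoutI φ} (hg : HasReducedForm φ P C g)
    {i : ι} {x : G i} (hx : x ∈ P i) : HasReducedForm φ P C (of i x * g) := by
  classical
  obtain ⟨k, hk, w, hw, hwP, rfl⟩ := hg
  set p := Word.equivPair i w
  have hw_eq : w = Word.rcons p := ((Word.equivPair i).symm_apply_apply w).symm
  have hhead : p.head ∈ P i := by
    by_cases h1 : p.head = 1
    · exact h1 ▸ one_mem _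
    · refine hwP ⟨i, p.head⟩ ?_
      rw [hw_eq, Word.mem_rcons_iff]
      exact Or.inr ⟨h1, rfl, rfl⟩
  have htail : ∀ l ∈ p.tail.toList, l.2 ∉ (φ l.1).range ∧ l.2 ∈ P l.1 := by
    rintro ⟨j, y⟩ hl
    have hl' := Word.mem_of_mem_equivPair_tail y hl
    exact ⟨hw _ hl', hwP _ hl'⟩
  have hkP : φ i k ∈ P i := (hPC i).ge hk
  -- `x * base k` is absorbed into the first letter of `w` when that letter comes from `G i`
  set z := x * φ i k * p.head
  have hz : z ∈ P i := mul_mem (mul_mem hx hkP) hhead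
  have hprod : of i x * (base φ k * ofCoprodI w.prod) = of i z * ofCoprodI p.tail.prod := by
    conv_lhs => rw [hw_eq, Word.prod_rcons, map_mul, ofCoprodI_of, ← of_apply_eq_base φ i k]
    simp only [z, map_mul, mul_assoc]
  by_cases hzφ : z ∈ (φ i).range
  · obtain ⟨k', hk'⟩ := hzφ
    refine ⟨k', ?_, p.tail, fun l hl => (htail l hl).1, fun l hl => (htail l hl).2, ?_⟩
    · rw [← hPC i, Subgroup.mem_comap, hk']
      exact hz
    · rw [hprod, ← hk', of_apply_eq_base]
  · have hz1 : z ≠ 1 := fun h => hzφ (h ▸ one_mem _)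
    refine ⟨1, one_mem _, Word.cons z p.tail p.fstIdx_ne hz1, ?_, ?_, ?_⟩
    · intro l hl
      rcases List.mem_cons.1 hl with rfl | hl
      exacts [hzφ, (htail l hl).1]
    · intro l hl
      rcases List.mem_cons.1 hl with rfl | hl
      exacts [hz, (htail l hl).2]
    · rw [hprod, Word.prod_cons, map_one, one_mul, map_mul ofCoprodI, ofCoprodI_of]

theorem hasReducedForm_of_mem_iSup {P : ∀ i, Subgroup (G i)} {C : Subgroup H}
    (hPC : ∀ i, (P i).comap (φ i) = C) {g : PushoutI φ} (hg : g ∈ ⨆ i, (P i).map (of i)) :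
    HasReducedForm φ P C g := by
  rw [Subgroup.iSup_eq_closure] at hg
  induction hg using Subgroup.closure_induction_left with
  | one => exact ⟨1, one_mem _, .empty, by simp [Reduced, Word.empty], by simp [Word.empty],
      by simp [Word.prod_empty]⟩
  | mul_left x hx y _ ih =>
    obtain ⟨i, a, ha, rfl⟩ := by simpa using hx
    exact ih.of_mul hPC ha
  | inv_mul_cancel x hx y _ ih =>
    obtain ⟨i, a, ha, rfl⟩ := by simpa using hx
    exact map_inv (of (φ := φ) i) a ▸ ih.of_mul hPC (inv_mem ha)

theorem of_mem_iSup_map_iff (hφ : ∀ i, Function.Injective (φ i)) {P : ∀ i, Subgroup (G i)}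
    {C : Subgroup H} (hPC : ∀ i, (P i).comap (φ i) = C) {i : ι} {x : G i} :
    of (φ := φ) i x ∈ ⨆ j, (P j).map (of j) ↔ x ∈ P i := by
  refine ⟨fun hx => ?_, fun hx => Subgroup.mem_iSup_of_mem i ⟨x, hx, rfl⟩⟩
  obtain ⟨k, hk, w, hw, hwP, hxw⟩ := hasReducedForm_of_mem_iSup hPC hx
  have hkP : φ i k ∈ P i := (hPC i).ge hk
  have hw_of : ofCoprodI w.prod = of (φ := φ) i ((φ i k)⁻¹ * x) := by
    rw [map_mul, map_inv, of_apply_eq_base, hxw, inv_mul_cancel_left]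
  have hfst := hw.fst_eq_of_mem_range_of hφ ⟨_, hw_of.symm⟩
  have hwP' : ofCoprodI w.prod ∈ (P i).map (of (φ := φ) i) := by
    rw [ofCoprodI_word_prod]
    refine list_prod_mem fun y hy => ?_
    obtain ⟨⟨j, y⟩, hl, rfl⟩ := List.mem_map.1 hy
    obtain rfl : j = i := hfst _ hl
    exact ⟨y, hwP _ hl, rfl⟩
  obtain ⟨y, hy, hyx⟩ := hw_of ▸ hwP'
  rw [of_injective hφ i hyx] at hy
  simpa using mul_mem hkP hy

theorem iSup_range_of_eq_top [Nonempty ι] : ⨆ i, (of (φ := φ) i).range = ⊤ := by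
  refine (Subgroup.eq_top_iff' _).2 fun g => ?_
  induction g using induction_on with
  | of i x => exact Subgroup.mem_iSup_of_mem i ⟨x, rfl⟩
  | base h =>
    obtain ⟨i⟩ := ‹Nonempty ι›
    exact Subgroup.mem_iSup_of_mem i ⟨φ i h, of_apply_eq_base φ i h⟩
  | mul x y hx hy => exact mul_mem hx hy

theorem exists_fg_iSup_map_eq_top [Nonempty ι] [Group.FG (PushoutI φ)]
    (hφ : ∀ i, Function.Injective (φ i)) :
    ∃ P : ∀ i, Subgroup (G i), (∀ i, (P i).FG) ∧ ⨆ i, (P i).map (of (φ := φ) i) = ⊤ := by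
  classical
  obtain ⟨t, hts, ht⟩ := Group.exists_finset_subset_closure_eq_top
    ((Subgroup.iSup_eq_closure _).symm.trans (iSup_range_of_eq_top (φ := φ)))
  refine ⟨fun i => Subgroup.closure (of i ⁻¹' (t : Set (PushoutI φ))), fun i => ?_, ?_⟩
  · have hfin := t.finite_toSet.preimage (of_injective hφ i).injOn
    exact ⟨hfin.toFinset, by rw [Set.Finite.coe_toFinset]⟩
  · rw [eq_top_iff, ← ht, Subgroup.closure_le]
    intro g hg
    obtain ⟨i, x, rfl⟩ := by simpa using hts hg
    exact Subgroup.mem_iSup_of_mem i ⟨x, Subgroup.subset_closure hg, rfl⟩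

end Monoid.PushoutI

theorem Subgroup.exists_fg_le_comap_eq_comap {K M A : Type*} [Group K] [Group M] [CommGroup A]
    (kM : K →* M) (kA : K →* A) (hA : Function.Injective kA) {M₁ : Subgroup M}
    {B₁ : Subgroup A} (hM₁ : M₁.FG) (hB₁ : B₁.FG) :
    ∃ (M₀ : Subgroup M) (B₀ : Subgroup A),
      M₀.FG ∧ M₁ ≤ M₀ ∧ B₁ ≤ B₀ ∧ M₀.comap kM = B₀.comap kA := by
  set M₀ := M₁ ⊔ (B₁.comap kA).map kM
  have hBK : (B₁.comap kA).FG := .of_map_injective hA <|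
    hB₁.of_le_of_commGroup (Subgroup.map_comap_le _ _)
  refine ⟨M₀, B₁ ⊔ (M₀.comap kM).map kA, hM₁.sup (hBK.map kM), le_sup_left, le_sup_left, ?_⟩
  refine le_antisymm (fun k hk => Subgroup.mem_sup_right (Subgroup.mem_map_of_mem kA hk))
    fun k hk => ?_
  -- as `A` is abelian, `kA k = b * kA k'` with `b ∈ B₁`, `kM k' ∈ M₀`; then `b = kA (k * k'⁻¹)`
  obtain ⟨b, hb, _, ⟨k', hk', rfl⟩, hbk⟩ := Subgroup.mem_sup.1 hk
  have hkk' : k * k'⁻¹ ∈ B₁.comap kA := by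
    simpa [Subgroup.mem_comap, ← hbk] using hb
  simpa using mul_mem (Subgroup.mem_sup_right (Subgroup.mem_map_of_mem kM hkk')) hk'

/-- If `G = M *_K A` is an amalgamated free product with `A` abelian and `G`
finitely generated, then `M` is finitely generated. -/
theorem stmt10 {K : Type*} {M A : Type u} [Group K] [Group M] [CommGroup A]
    (kM : K →* M) (kA : K →* A)
    (hM : Function.Injective kM) (hA : Function.Injective kA)
    (hfg : Group.FG (Monoid.PushoutI (twoHom kM kA))) :
    Group.FG M := by
  have hφ : ∀ b, Function.Injective (twoHom kM kA b)
    | true => hM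
    | false => hA
  obtain ⟨P, hPfg, hPtop⟩ := Monoid.PushoutI.exists_fg_iSup_map_eq_top hφ
  obtain ⟨M₀, B₀, hM₀fg, hPM₀, hPB₀, hcomap⟩ :=
    Subgroup.exists_fg_le_comap_eq_comap kM kA hA (hPfg true) (hPfg false)
  let Q : ∀ b, Subgroup (twoFam M A b)
    | true => M₀
    | false => B₀
  have hQC : ∀ b, (Q b).comap (twoHom kM kA b) = M₀.comap kM
    | true => rfl
    | false => hcomap.symm
  have hQtop : ⨆ b, (Q b).map (Monoid.PushoutI.of (φ := twoHom kM kA) b) = ⊤ := by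
    refine top_unique (hPtop ▸ iSup_mono fun b => Subgroup.map_mono ?_)
    cases b
    exacts [hPB₀, hPM₀]
  have hM₀ : M₀ = ⊤ := (Subgroup.eq_top_iff' _).2 fun m =>
    (Monoid.PushoutI.of_mem_iSup_map_iff hφ hQC (i := true)).1 (hQtop ▸ Subgroup.mem_top _)
  exact Group.fg_def.2 (hM₀ ▸ hM₀fg)
end

section
/- Let K ≥ 1 and let G be a countable group such that every finitely generated subgroup of G contains an abelian subgroup of index at most K. Then G contains an abelian subgroup of index at most K. -/
/-!
Exhaust `G` by the finitely generated subgroups `⟨s⟩`, `s : Finset G`, choose an abelian subgroup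
`B s ≤ ⟨s⟩` of index at most `K` in each, and let `D` be the set of `g` lying in `B s` for
`U`-most `s`, where `U` is an ultrafilter refining `atTop`. Any two elements of `D` lie in a
common `B s`, so `D` is abelian. Any `K + 1` elements of `G` lie in `⟨s⟩` for `U`-most `s`, so
two of them share a coset of `B s`; as there are finitely many pairs, one pair does so for
`U`-most `s`, hence shares a coset of `D`. So `G ⧸ D` has at most `K` elements.
-/

open Filter Function

lemma natCard_le_and_ne_zero_iff_forall_not_injective {Q : Type*} [Nonempty Q] {n : ℕ} :
    Nat.card Q ≤ n ∧ Nat.card Q ≠ 0 ↔ ∀ q : Fin (n + 1) → Q, ¬ Injective q := by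
  constructor
  · rintro ⟨hle, hne⟩ q hq
    have : Finite Q := (Nat.card_ne_zero.mp hne).2
    have := Nat.card_le_card_of_injective q hq
    simp only [Nat.card_eq_fintype_card, Fintype.card_fin] at this
    omega
  · intro h
    have : Finite Q := by
      by_contra hinf
      rw [not_finite_iff_infinite] at hinf
      exact h _ ((Infinite.natEmbedding Q).injective.comp Fin.val_injective)
    refine ⟨?_, Nat.card_ne_zero.mpr ⟨‹_›, ‹_›⟩⟩
    by_contra! hcard
    let e := Finite.equivFin Q
    exact h (e.symm ∘ Fin.castLE hcard) (e.symm.injective.comp (Fin.castLE_injective hcard))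

namespace Subgroup

variable {G : Type*} [Group G]

lemma index_le_and_ne_zero_iff {D : Subgroup G} {n : ℕ} :
    D.index ≤ n ∧ D.index ≠ 0 ↔
      ∀ g : Fin (n + 1) → G, ∃ a b, (g a)⁻¹ * g b ∈ D ∧ a ≠ b := by
  rw [index, natCard_le_and_ne_zero_iff_forall_not_injective,
    (QuotientGroup.mk_surjective.comp_left : Surjective fun g : Fin (n + 1) → G ↦ _ ∘ g).forall]
  simp only [not_injective_iff, comp_apply, QuotientGroup.eq]

variable {ι : Type*}

def liminf (l : Filter ι) (C : ι → Subgroup G) : Subgroup G where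
  carrier := {g | ∀ᶠ i in l, g ∈ C i}
  one_mem' := .of_forall fun i ↦ one_mem (C i)
  mul_mem' ha hb := (ha.and hb).mono fun _ h ↦ mul_mem h.1 h.2
  inv_mem' ha := ha.mono fun _ h ↦ inv_mem h

lemma isMulCommutative_liminf {l : Filter ι} [l.NeBot] {C : ι → Subgroup G}
    (hC : ∀ i, IsMulCommutative (C i)) : IsMulCommutative (liminf l C) :=
  .of_setLike_mul_comm fun _ ha _ hb ↦
    let ⟨i, hai, hbi⟩ := (ha.and hb).exists
    have := hC i
    setLike_mul_comm hai hbi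

lemma index_liminf_le_and_ne_zero (U : Ultrafilter ι) {C : ι → Subgroup G} {n : ℕ}
    (hC : ∀ g : Fin (n + 1) → G, ∀ᶠ i in U, ∃ a b, (g a)⁻¹ * g b ∈ C i ∧ a ≠ b) :
    (liminf U C).index ≤ n ∧ (liminf U C).index ≠ 0 := by
  refine index_le_and_ne_zero_iff.mpr fun g ↦ ?_
  have hpair : ∀ᶠ i in U, ∃ p : Fin (n + 1) × Fin (n + 1), (g p.1)⁻¹ * g p.2 ∈ C i ∧ p.1 ≠ p.2 :=
    (hC g).mono fun _ ⟨a, b, h⟩ ↦ ⟨(a, b), h⟩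
  obtain ⟨⟨a, b⟩, hab⟩ := Ultrafilter.eventually_exists_iff.mp hpair
  obtain ⟨_, -, hne⟩ := hab.exists
  exact ⟨a, b, hab.mono fun _ h ↦ h.1, hne⟩

end Subgroup

open Subgroup in
theorem stmt11_general {G : Type*} [Group G] (K : ℕ)
    (h : ∀ H : Subgroup G, H.FG →
      ∃ B : Subgroup H, IsMulCommutative B ∧ B.index ≤ K ∧ B.index ≠ 0) :
    ∃ B : Subgroup G, IsMulCommutative B ∧ B.index ≤ K ∧ B.index ≠ 0 := by
  choose B hBcomm hBindex using fun s : Finset G ↦ h (closure s) ⟨s, rfl⟩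
  obtain ⟨U, hU⟩ : ∃ U : Ultrafilter (Finset G), (U : Filter (Finset G)) ≤ atTop :=
    ⟨.of atTop, Ultrafilter.of_le _⟩
  let C (s : Finset G) : Subgroup G := (B s).map (closure (s : Set G)).subtype
  have hcomm : ∀ s, IsMulCommutative (C s) := fun s ↦ by have := hBcomm s; infer_instance
  refine ⟨liminf U C, isMulCommutative_liminf hcomm, ?_⟩
  refine index_liminf_le_and_ne_zero U fun g ↦ ?_
  have hgen : ∀ᶠ s : Finset G in U, ∀ a, g a ∈ closure (s : Set G) :=
    hU <| eventually_all.mpr fun a ↦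
      (eventually_ge_atTop {g a}).mono fun s hs ↦ subset_closure (Finset.singleton_subset_iff.mp hs)
  filter_upwards [hgen] with s hs
  obtain ⟨a, b, hmem, hab⟩ := index_le_and_ne_zero_iff.mp (hBindex s) fun a ↦ ⟨g a, hs a⟩
  exact ⟨a, b, ⟨_, hmem, rfl⟩, hab⟩

/-- If `G` is countable and every finitely generated subgroup of `G` has an abelian
subgroup of index at most `K`, then so does `G`. -/
theorem stmt11 {G : Type*} [Group G] [Countable G] (K : ℕ) (hK : 1 ≤ K)
    (h : ∀ H : Subgroup G, H.FG →
      ∃ B : Subgroup H, IsMulCommutative B ∧ B.index ≤ K ∧ B.index ≠ 0) :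
    ∃ B : Subgroup G, IsMulCommutative B ∧ B.index ≤ K ∧ B.index ≠ 0 :=
  stmt11_general K h
end
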